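/- The congruence subgroup Γ₁(3) of SL(2,ℤ) is generated by two elements α and β satisfying the single relation (αβ)³ = 1; equivalently, Γ₁(3) is isomorphic to the free product ℤ * (ℤ/3ℤ). -/

import Mathlib

/-!
`Γ₁(3)` is generated by `T = [[1, 1], [0, 1]]` and the element `U = [[1, 1], [-3, -2]]` of order
three. Indeed, for `g = [[a, b], [c, d]] ∈ Γ₁(3)` with `c ≠ 0`, left multiplication by `U⁻¹ Tⁿ` or
`U Tⁿ⁻¹` replaces `c` by `±(3(a + nc) ± c)`; taking `a + nc` to be the balanced remainder of `a`
modulo `c` (non-zero since `3 ∣ c` and `gcd(a, c) = 1`) makes this strictly smaller than `|c|`,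
and once `c = 0` the matrix is a power of `T`.

The map `ℤ ∗ ℤ/3 → Γ₁(3)` sending the generators to `T` and `U` is injective by ping-pong on the
upper half-plane: non-zero powers of `T` move the strip `-1 < Re z < 0` off itself, while `U` and
`U²` map its complement into it. Finally `α = T` and `β = T⁻¹ U` satisfy `αβ = U`.
-/

open CongruenceSubgroup
open scoped Pointwise

universe u

namespace Monoid.Coprod

variable {M N : Type u} [Group M] [Group N]

instance instGroupCond : ∀ b, Group (cond b M N)
  | true => ‹Group M›
  | false => ‹Group N›

-- Mathlib's ping-pong lemma is stated for `CoprodI`; `M ∗ N` embeds into the `Bool`-indexed one.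
def toCoprodI : M ∗ N →* CoprodI (fun b => cond b M N) :=
  lift (CoprodI.of (M := fun b => cond b M N) (i := true))
    (CoprodI.of (M := fun b => cond b M N) (i := false))

def ofCoprodI : CoprodI (fun b => cond b M N) →* M ∗ N :=
  CoprodI.lift fun
    | true => inl
    | false => inr

lemma ofCoprodI_comp_toCoprodI : (ofCoprodI (M := M) (N := N)).comp toCoprodI = .id _ := by
  ext <;> simp [toCoprodI, ofCoprodI]

lemma toCoprodI_injective : Function.Injective (toCoprodI (M := M) (N := N)) :=
  Function.LeftInverse.injective (g := ofCoprodI) (DFunLike.congr_fun ofCoprodI_comp_toCoprodI)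

theorem lift_injective_of_ping_pong {G α : Type*} [Group G] [MulAction G α] (f : M →* G)
    (g : N →* G) (hcard : 3 ≤ Cardinal.mk M ∨ 3 ≤ Cardinal.mk N) {X Y : Set α}
    (hX : X.Nonempty) (hY : Y.Nonempty) (hXY : Disjoint X Y)
    (hf : ∀ m : M, m ≠ 1 → f m • Y ⊆ X) (hg : ∀ n : N, n ≠ 1 → g n • X ⊆ Y) :
    Function.Injective (lift f g) := by
  let F : ∀ b, cond b M N →* G := fun
    | true => f
    | false => g
  have hlift : lift f g = (CoprodI.lift F).comp toCoprodI := by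
    ext <;> simp [toCoprodI, F]
  rw [hlift]
  refine (CoprodI.lift_injective_of_ping_pong F ?_ (fun b => cond b X Y) ?_ ?_ ?_).comp
    toCoprodI_injective
  · exact hcard.elim (fun h => .inr ⟨true, h⟩) (fun h => .inr ⟨false, h⟩)
  · rintro (_ | _) <;> assumption
  · rintro (_ | _) (_ | _) h <;> first | exact absurd rfl h | exact hXY | exact hXY.symm
  · rintro (_ | _) (_ | _) h <;> first | exact absurd rfl h | exact hf | exact hg

end Monoid.Coprod

lemma Subgroup.closure_pair_inv_mul {G : Type*} [Group G] (a b : G) :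
    Subgroup.closure {a, a⁻¹ * b} = Subgroup.closure {a, b} := by
  have ha : a ∈ Subgroup.closure {a, b} := Subgroup.subset_closure (by simp)
  have hb : b ∈ Subgroup.closure {a, b} := Subgroup.subset_closure (by simp)
  have ha' : a ∈ Subgroup.closure {a, a⁻¹ * b} := Subgroup.subset_closure (by simp)
  have hab : a⁻¹ * b ∈ Subgroup.closure {a, a⁻¹ * b} := Subgroup.subset_closure (by simp)
  refine le_antisymm ?_ ?_ <;>
    simp only [Subgroup.closure_le, Set.insert_subset_iff, Set.singleton_subset_iff,
      SetLike.mem_coe]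
  · exact ⟨ha, mul_mem (inv_mem ha) hb⟩
  · exact ⟨ha', by simpa using mul_mem ha' hab⟩

lemma Subgroup.closure_eq_top_of_closure_image_eq {G : Type*} [Group G] {H : Subgroup G}
    {s : Set H} (h : Subgroup.closure (((↑) : H → G) '' s) = H) : Subgroup.closure s = ⊤ := by
  apply Subgroup.map_injective H.subtype_injective
  rw [MonoidHom.map_closure, ← MonoidHom.range_eq_map, Subgroup.range_subtype]
  exact h

def zmodPowHom {G : Type*} [Monoid G] {n : ℕ} [NeZero n] {u : G} (hu : u ^ n = 1) :
    Multiplicative (ZMod n) →* G where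
  toFun x := u ^ x.toAdd.val
  map_one' := by simp
  map_mul' x y := by rw [toAdd_mul, ZMod.val_add, ← pow_eq_pow_mod _ hu, pow_add]

namespace Gamma1Three

open ModularGroup Matrix MatrixGroups UpperHalfPlane
open scoped Monoid.Coprod

def U : SL(2, ℤ) := ⟨!![1, 1; -3, -2], by norm_num [det_fin_two_of]⟩

lemma coe_U : (U : Matrix (Fin 2) (Fin 2) ℤ) = !![1, 1; -3, -2] := rfl

lemma U_pow_three : U ^ 3 = 1 := by
  ext i j; fin_cases i <;> fin_cases j <;> rfl

lemma coe_U_sq : ((U ^ 2 : SL(2, ℤ)) : Matrix (Fin 2) (Fin 2) ℤ) = !![-2, -1; 3, 1] := by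
  ext i j; fin_cases i <;> fin_cases j <;> rfl

lemma T_mem : T ∈ Gamma1 3 := by
  simp [Gamma1_mem, coe_T]

lemma U_mem : U ∈ Gamma1 3 := by
  simp [Gamma1_mem, coe_U]; decide

lemma eq_T_zpow_of_mem_Gamma1 {N : ℕ} (hN : 2 < N) {g : SL(2, ℤ)} (hg : g ∈ Gamma1 N)
    (hc : g 1 0 = 0) : g = T ^ g 0 1 := by
  have had : g 0 0 * g 1 1 = 1 := by
    have := g.det_coe
    rwa [det_fin_two, hc, mul_zero, sub_zero] at this
  have ha : g 0 0 = 1 := by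
    rcases Int.eq_one_or_neg_one_of_mul_eq_one had with h | h
    · exact h
    · have := ((Gamma1_mem N g).1 hg).1
      rw [h, Int.cast_neg, Int.cast_one] at this
      exact absurd this (@ZMod.neg_one_ne_one N ⟨hN⟩)
  have hd : g 1 1 = 1 := by simpa [ha] using had
  ext i j
  fin_cases i <;> fin_cases j <;> simp [ha, hc, hd, coe_T_zpow]

lemma abs_three_mul_add_lt_or_abs_three_mul_sub_lt {b c : ℤ} (hb : b ≠ 0) (h : 2 * |b| ≤ |c|) :
    |3 * b + c| < |c| ∨ |3 * b - c| < |c| := by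
  grind

lemma exists_add_mul_ne_zero_and_two_mul_abs_le {a c : ℤ} (hc : c ≠ 0) (hca : ¬ c ∣ a) :
    ∃ n : ℤ, a + n * c ≠ 0 ∧ 2 * |a + n * c| ≤ |c| := by
  have hm : 0 < c.natAbs := Int.natAbs_pos.2 hc
  obtain ⟨n, hn⟩ : c ∣ a.bmod c.natAbs - a :=
    Int.natAbs_dvd.1 (Int.ModEq.dvd (Int.bmod_emod (x := a) (m := c.natAbs)).symm)
  refine ⟨n, fun h => hca ⟨-n, by linarith⟩, ?_⟩
  have h1 := Int.le_bmod (x := a) hm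
  have h2 := Int.bmod_lt (x := a) hm
  rw [show a + n * c = a.bmod c.natAbs by linarith, Int.abs_eq_natAbs c]
  rcases abs_cases (a.bmod c.natAbs) with ⟨h, -⟩ | ⟨h, -⟩ <;> omega

lemma U_inv_mul_T_zpow_mul_apply_one_zero (g : SL(2, ℤ)) (n : ℤ) :
    (U⁻¹ * T ^ n * g) 1 0 = 3 * (g 0 0 + n * g 1 0) + g 1 0 := by
  simp [adjugate_fin_two, coe_U, coe_T_zpow, mul_apply, Fin.sum_univ_two]; ring

lemma U_mul_T_zpow_mul_apply_one_zero (g : SL(2, ℤ)) (n : ℤ) :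
    (U * T ^ (n - 1) * g) 1 0 = -(3 * (g 0 0 + n * g 1 0) - g 1 0) := by
  simp [coe_U, coe_T_zpow, mul_apply, Fin.sum_univ_two]; ring

lemma exists_mem_closure_abs_mul_apply_one_zero_lt {g : SL(2, ℤ)} (hg : g ∈ Gamma1 3)
    (hc : g 1 0 ≠ 0) : ∃ h ∈ Subgroup.closure {T, U}, |(h * g) 1 0| < |g 1 0| := by
  have h3c : (3 : ℤ) ∣ g 1 0 :=
    (ZMod.intCast_zmod_eq_zero_iff_dvd _ 3).1 ((Gamma1_mem 3 g).1 hg).2.2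
  have hca : ¬ g 1 0 ∣ g 0 0 := by
    intro hdvd
    have hdet := g.det_coe
    rw [det_fin_two] at hdet
    have hcop : IsCoprime (g 0 0) (g 1 0) := ⟨g 1 1, -g 0 1, by linear_combination hdet⟩
    have := Int.isUnit_iff.1 (hcop.isUnit_of_dvd' hdvd dvd_rfl)
    omega
  obtain ⟨n, hb, hbc⟩ := exists_add_mul_ne_zero_and_two_mul_abs_le hc hca
  have hT : T ∈ Subgroup.closure {T, U} := Subgroup.subset_closure (by simp)
  have hU : U ∈ Subgroup.closure {T, U} := Subgroup.subset_closure (by simp)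
  rcases abs_three_mul_add_lt_or_abs_three_mul_sub_lt hb hbc with h | h
  · refine ⟨U⁻¹ * T ^ n, mul_mem (inv_mem hU) (zpow_mem hT n), ?_⟩
    rwa [U_inv_mul_T_zpow_mul_apply_one_zero]
  · refine ⟨U * T ^ (n - 1), mul_mem hU (zpow_mem hT _), ?_⟩
    rwa [U_mul_T_zpow_mul_apply_one_zero, abs_neg]

theorem Gamma1_three_eq_closure : Gamma1 3 = Subgroup.closure {T, U} := by
  have hle : Subgroup.closure {T, U} ≤ Gamma1 3 :=
    (Subgroup.closure_le _).2 (Set.insert_subset T_mem (Set.singleton_subset_iff.2 U_mem))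
  refine le_antisymm (fun g hg => ?_) hle
  induction hn : (g 1 0).natAbs using Nat.strong_induction_on generalizing g with
  | _ n ih =>
    by_cases hc : g 1 0 = 0
    · rw [eq_T_zpow_of_mem_Gamma1 (by norm_num) hg hc]
      exact zpow_mem (Subgroup.subset_closure (by simp)) _
    obtain ⟨h, hh, hlt⟩ := exists_mem_closure_abs_mul_apply_one_zero_lt hg hc
    have hlt' : ((h * g) 1 0).natAbs < n := by
      rw [← hn]; zify; exact hlt
    have hhg : h * g ∈ Subgroup.closure {T, U} := ih _ hlt' (h * g) (mul_mem (hle hh) hg) rfl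
    simpa using mul_mem (inv_mem hh) hhg

lemma re_smul (g : SL(2, ℤ)) (z : ℍ) :
    (g • z).re = ((g 0 0 * z.re + g 0 1) * (g 1 0 * z.re + g 1 1) + g 0 0 * g 1 0 * z.im ^ 2) /
      ((g 1 0 * z.re + g 1 1) ^ 2 + (g 1 0 * z.im) ^ 2) := by
  rw [← coe_re, coe_specialLinearGroup_apply, Complex.div_re, ← add_div, Complex.normSq_apply]
  congr 1 <;> simp <;> ring

def strip : Set ℍ := re ⁻¹' Set.Ioo (-1) 0

lemma T_zpow_smul_strip_subset {n : ℤ} (hn : n ≠ 0) : T ^ n • strip ⊆ stripᶜ := by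
  rintro _ ⟨z, ⟨hz1, hz2⟩, rfl⟩ ⟨h1, h2⟩
  rw [re_T_zpow_smul] at h1 h2
  have : (1 : ℝ) ≤ |(n : ℝ)| := by exact_mod_cast Int.one_le_abs hn
  cases abs_cases (n : ℝ) <;> linarith

lemma U_pow_smul_compl_strip_subset {k : ℕ} (hk : ¬ 3 ∣ k) : U ^ k • stripᶜ ⊆ strip := by
  rintro _ ⟨z, hz, rfl⟩
  simp only [strip, Set.mem_compl_iff, Set.mem_preimage, Set.mem_Ioo, not_and_or, not_lt] at hz ⊢
  have hy := z.im_pos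
  have hU : U ^ k = U ∨ U ^ k = U ^ 2 := by
    rw [pow_eq_pow_mod k U_pow_three]
    rcases (by omega : k % 3 = 1 ∨ k % 3 = 2) with h | h <;> simp [h]
  rcases hU with h | h <;> rw [h, re_smul] <;> first | rw [coe_U] | rw [coe_U_sq]
  all_goals
    norm_num
    rw [lt_div_iff₀ (by positivity), div_lt_iff₀ (by positivity)]
    constructor <;> rcases hz with h | h <;> nlinarith

noncomputable def freeProductHom : Multiplicative ℤ ∗ Multiplicative (ZMod 3) →* SL(2, ℤ) :=
  Monoid.Coprod.lift (zpowersHom _ T) (zmodPowHom U_pow_three)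

lemma freeProductHom_injective : Function.Injective freeProductHom := by
  refine Monoid.Coprod.lift_injective_of_ping_pong _ _ (.inl ?_) (X := stripᶜ) (Y := strip)
    ⟨I, by simp [strip]⟩ ⟨(-1 / 2 : ℝ) +ᵥ I, by norm_num [strip]⟩ disjoint_compl_left ?_ ?_
  · have : ((3 : ℕ) : Cardinal) ≤ Cardinal.mk (Multiplicative ℤ) :=
      (Cardinal.natCast_lt_aleph0 (n := 3)).le.trans (Cardinal.aleph0_le_mk _)
    exact_mod_cast this
  · intro m hm
    exact T_zpow_smul_strip_subset (fun h => hm (toAdd_eq_zero.1 h))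
  · intro x hx
    have hval : x.toAdd.val ≠ 0 := fun h => hx ((ZMod.val_eq_zero _).1 h)
    exact U_pow_smul_compl_strip_subset (by have := ZMod.val_lt x.toAdd; omega)

lemma range_freeProductHom : freeProductHom.range = Gamma1 3 := by
  refine le_antisymm ?_ ?_
  · rw [freeProductHom, Monoid.Coprod.range_lift, sup_le_iff, Subgroup.range_zpowersHom,
      Subgroup.zpowers_le]
    exact ⟨T_mem, by rintro _ ⟨x, rfl⟩; exact pow_mem U_mem _⟩
  · rw [Gamma1_three_eq_closure, Subgroup.closure_le, Set.insert_subset_iff,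
      Set.singleton_subset_iff]
    exact ⟨⟨.inl (.ofAdd 1), by simp [freeProductHom]⟩,
      ⟨.inr (.ofAdd 1), by simp [freeProductHom, zmodPowHom, ZMod.val_one_eq_one_mod]⟩⟩

end Gamma1Three

open ModularGroup Gamma1Three in
/-- The congruence subgroup `Γ₁(3) ⊆ SL(2,ℤ)` is generated by two
elements `α, β` satisfying the single relation `(αβ)³ = 1`; equivalently, `Γ₁(3)` is
isomorphic to the free product `ℤ * (ℤ/3ℤ)`. -/
theorem stmt_2 :
    (∃ α β : Gamma1 3, Subgroup.closure ({α, β} : Set (Gamma1 3)) = ⊤ ∧ (α * β) ^ 3 = 1) ∧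
      Nonempty ((Gamma1 3) ≃* Monoid.Coprod (Multiplicative ℤ) (Multiplicative (ZMod 3))) := by
  refine ⟨⟨⟨T, T_mem⟩, ⟨T, T_mem⟩⁻¹ * ⟨U, U_mem⟩, ?_, ?_⟩, ⟨?_⟩⟩
  · rw [Subgroup.closure_pair_inv_mul]
    apply Subgroup.closure_eq_top_of_closure_image_eq
    rw [Set.image_pair]
    exact Gamma1_three_eq_closure.symm
  · rw [mul_inv_cancel_left]
    exact Subtype.ext U_pow_three
  · exact ((MonoidHom.ofInjective freeProductHom_injective).trans
      (MulEquiv.subgroupCongr range_freeProductHom)).symm
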